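/- Let ρ > 0 and let ψ : ℝ → ℝ be measurable with ∫_ℝ ψ(y)^2 dy ≤ 1. Then ∫_0^∞ e^{2ρx} · ( ∫_x^∞ |ψ(y)| · e^{−ρy} dy )^2 dx ≤ 1/ρ^2, with all integrals taken with respect to Lebesgue measure. -/

import Mathlib

/-!
Cauchy–Schwarz with the weight `e^{-ρy}` on `(x, ∞)` bounds the inner integral squared by
`e^{-ρx}/ρ · ∫_x^∞ ψ² e^{-ρy}`, so the left side is at most
`ρ⁻¹ ∫_0^∞ e^{ρx} ∫_x^∞ ψ(y)² e^{-ρy} dy dx`. Exchanging the order of integration (Tonelli), the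
weight of `ψ(y)²` becomes `ρ⁻¹ e^{-ρy} ∫_0^y e^{ρx} dx ≤ ρ⁻²`, and `‖ψ‖₂ ≤ 1` finishes.
-/

open Real MeasureTheory ENNReal Set

theorem sq_lintegral_mul_le_lintegral_sq_mul_mul_lintegral {α : Type*} [MeasurableSpace α]
    {μ : Measure α} {f w : α → ℝ≥0∞} (hf : AEMeasurable f μ) (hw : AEMeasurable w μ) :
    (∫⁻ a, f a * w a ∂μ) ^ 2 ≤ (∫⁻ a, f a ^ 2 * w a ∂μ) * ∫⁻ a, w a ∂μ := by
  have hsplit : ∀ a, f a * w a = (f a ^ 2 * w a) ^ (1 / 2 : ℝ) * w a ^ (1 / 2 : ℝ) := by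
    intro a
    rw [ENNReal.mul_rpow_of_nonneg _ _ (by norm_num), mul_assoc, ← ENNReal.rpow_add_of_nonneg _ _
      (by norm_num) (by norm_num), ← ENNReal.rpow_natCast, ← ENNReal.rpow_mul]
    norm_num
  have holder := lintegral_mul_norm_pow_le ((hf.pow_const 2).mul hw) hw
    (p := 1 / 2) (q := 1 / 2) (by norm_num) (by norm_num) (by norm_num)
  calc (∫⁻ a, f a * w a ∂μ) ^ 2
      ≤ ((∫⁻ a, f a ^ 2 * w a ∂μ) ^ (1 / 2 : ℝ) * (∫⁻ a, w a ∂μ) ^ (1 / 2 : ℝ)) ^ 2 := by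
        simp_rw [hsplit]
        gcongr
        exact holder
    _ = (∫⁻ a, f a ^ 2 * w a ∂μ) * ∫⁻ a, w a ∂μ := by
        rw [mul_pow, ← ENNReal.rpow_natCast, ← ENNReal.rpow_natCast, ← ENNReal.rpow_mul,
          ← ENNReal.rpow_mul]
        norm_num

theorem lintegral_mul_setLIntegral_Ioi_eq {μ : Measure ℝ} [SFinite μ] {h k : ℝ → ℝ≥0∞}
    (hh : Measurable h) (hk : Measurable k) (a : ℝ) :
    ∫⁻ x in Ioi a, h x * ∫⁻ y in Ioi x, k y ∂μ ∂μ = ∫⁻ y, k y * ∫⁻ x in Ioo a y, h x ∂μ ∂μ := by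
  set F : ℝ × ℝ → ℝ≥0∞ := {p | p.1 < p.2}.indicator fun p => h p.1 * k p.2
  have hF : Measurable F :=
    ((hh.comp measurable_fst).mul (hk.comp measurable_snd)).indicator
      (measurableSet_lt measurable_fst measurable_snd)
  have hinner : ∀ x, h x * ∫⁻ y in Ioi x, k y ∂μ = ∫⁻ y, F (x, y) ∂μ := by
    intro x
    rw [← lintegral_indicator measurableSet_Ioi, ← lintegral_const_mul _
      (hk.indicator measurableSet_Ioi)]
    congr 1 with y
    by_cases hxy : x < y <;> simp [F, indicator, hxy]
  have houter : ∀ y, k y * ∫⁻ x in Ioo a y, h x ∂μ = ∫⁻ x in Ioi a, F (x, y) ∂μ := by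
    intro y
    rw [← Iio_inter_Ioi, ← Measure.restrict_restrict measurableSet_Iio,
      ← lintegral_indicator measurableSet_Iio, ← lintegral_const_mul _
      (hh.indicator measurableSet_Iio)]
    congr 1 with x
    by_cases hxy : x < y <;> simp [F, indicator, hxy, mul_comm]
  simp_rw [hinner, houter]
  exact lintegral_lintegral_swap hF.aemeasurable

theorem setLIntegral_Ioi_ofReal_exp_neg_mul {ρ : ℝ} (hρ : 0 < ρ) (c : ℝ) :
    ∫⁻ y in Ioi c, ENNReal.ofReal (exp (-ρ * y)) = ENNReal.ofReal (exp (-ρ * c) / ρ) := by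
  rw [← ofReal_integral_eq_lintegral_ofReal (exp_neg_integrableOn_Ioi c hρ)
    (ae_of_all _ fun y => (exp_pos _).le), integral_exp_mul_Ioi (by linarith), neg_div_neg_eq]

theorem setLIntegral_Iic_ofReal_exp_mul {ρ : ℝ} (hρ : 0 < ρ) (c : ℝ) :
    ∫⁻ x in Iic c, ENNReal.ofReal (exp (ρ * x)) = ENNReal.ofReal (exp (ρ * c) / ρ) := by
  rw [← ofReal_integral_eq_lintegral_ofReal (integrableOn_exp_mul_Iic hρ c)
    (ae_of_all _ fun y => (exp_pos _).le), integral_exp_mul_Iic hρ]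

theorem ofReal_exp_neg_mul_mul_setLIntegral_Ioo_le {ρ : ℝ} (hρ : 0 < ρ) (a y : ℝ) :
    ENNReal.ofReal (exp (-ρ * y)) *
        ∫⁻ x in Ioo a y, ENNReal.ofReal (exp (ρ * x)) * ENNReal.ofReal ρ⁻¹ ≤
      ENNReal.ofReal (1 / ρ ^ 2) := by
  calc _ ≤ ENNReal.ofReal (exp (-ρ * y)) *
        ((∫⁻ x in Iic y, ENNReal.ofReal (exp (ρ * x))) * ENNReal.ofReal ρ⁻¹) := by
        rw [← lintegral_mul_const _ (by fun_prop)]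
        gcongr
        exact fun _ hx => hx.2.le
    _ = ENNReal.ofReal (1 / ρ ^ 2) := by
        rw [setLIntegral_Iic_ofReal_exp_mul hρ, ← ENNReal.ofReal_mul (by positivity),
          ← ENNReal.ofReal_mul (by positivity)]
        congr 1
        rw [neg_mul, exp_neg]
        field_simp

theorem exp_mul_sq_setLIntegral_Ioi_le {ρ : ℝ} (hρ : 0 < ρ) {ψ : ℝ → ℝ} (hψ : Measurable ψ)
    (x : ℝ) :
    ENNReal.ofReal (exp (2 * ρ * x)) *
        (∫⁻ y in Ioi x, ENNReal.ofReal (|ψ y| * exp (-ρ * y))) ^ 2 ≤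
      ENNReal.ofReal (exp (ρ * x)) * ENNReal.ofReal ρ⁻¹ *
        ∫⁻ y in Ioi x, ENNReal.ofReal (ψ y ^ 2) * ENNReal.ofReal (exp (-ρ * y)) := by
  have cs := sq_lintegral_mul_le_lintegral_sq_mul_mul_lintegral (μ := volume.restrict (Ioi x))
    (f := fun y => ENNReal.ofReal |ψ y|) (w := fun y => ENNReal.ofReal (exp (-ρ * y)))
    (by fun_prop) (by fun_prop)
  simp only [← ENNReal.ofReal_pow (abs_nonneg _), sq_abs, ← ENNReal.ofReal_mul (abs_nonneg _),
    setLIntegral_Ioi_ofReal_exp_neg_mul hρ] at cs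
  calc _ ≤ ENNReal.ofReal (exp (2 * ρ * x)) *
        ((∫⁻ y in Ioi x, ENNReal.ofReal (ψ y ^ 2) * ENNReal.ofReal (exp (-ρ * y))) *
          ENNReal.ofReal (exp (-ρ * x) / ρ)) := by gcongr
    _ = ENNReal.ofReal (exp (2 * ρ * x) * (exp (-ρ * x) / ρ)) *
        ∫⁻ y in Ioi x, ENNReal.ofReal (ψ y ^ 2) * ENNReal.ofReal (exp (-ρ * y)) := by
      rw [ENNReal.ofReal_mul (exp_pos _).le]
      ring
    _ = _ := by
      rw [← ENNReal.ofReal_mul (exp_pos _).le, mul_div_assoc', ← exp_add, div_eq_mul_inv]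
      ring_nf

theorem stmt_10 (ρ : ℝ) (hρ : 0 < ρ) (ψ : ℝ → ℝ) (hψ : Measurable ψ)
    (hψ2 : (∫⁻ y : ℝ, ENNReal.ofReal (ψ y ^ 2)) ≤ 1) :
    (∫⁻ x in Set.Ioi (0 : ℝ), ENNReal.ofReal (Real.exp (2 * ρ * x)) *
        (∫⁻ y in Set.Ioi x, ENNReal.ofReal (|ψ y| * Real.exp (-ρ * y))) ^ 2) ≤
      ENNReal.ofReal (1 / ρ ^ 2) := by
  calc _ ≤ ∫⁻ x in Ioi 0, ENNReal.ofReal (exp (ρ * x)) * ENNReal.ofReal ρ⁻¹ *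
        ∫⁻ y in Ioi x, ENNReal.ofReal (ψ y ^ 2) * ENNReal.ofReal (exp (-ρ * y)) :=
        lintegral_mono fun x => exp_mul_sq_setLIntegral_Ioi_le hρ hψ x
    _ = ∫⁻ y, ENNReal.ofReal (ψ y ^ 2) * ENNReal.ofReal (exp (-ρ * y)) *
        ∫⁻ x in Ioo 0 y, ENNReal.ofReal (exp (ρ * x)) * ENNReal.ofReal ρ⁻¹ :=
        lintegral_mul_setLIntegral_Ioi_eq (by fun_prop) (by fun_prop) 0
    _ ≤ ∫⁻ y, ENNReal.ofReal (ψ y ^ 2) * ENNReal.ofReal (1 / ρ ^ 2) := by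
        refine lintegral_mono fun y => ?_
        rw [mul_assoc]
        gcongr
        exact ofReal_exp_neg_mul_mul_setLIntegral_Ioo_le hρ 0 y
    _ = (∫⁻ y, ENNReal.ofReal (ψ y ^ 2)) * ENNReal.ofReal (1 / ρ ^ 2) :=
        lintegral_mul_const _ (by fun_prop)
    _ ≤ ENNReal.ofReal (1 / ρ ^ 2) := (mul_le_mul_left hψ2 _).trans_eq (one_mul _)
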